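/- arXiv:2510.18273 — 3 statements merged into one kernel-verified Lean document; each statement's English description precedes it below -/
import Mathlib

section
/- Consider n agents with states x(k) ∈ ℝⁿ evolving under the delay-free distributed resource allocation dynamics x_i(k+1) = x_i(k) − η Σ_{j=1}^{n} W_{ij}(k) · g_n( g_l(f_i′(x_i(k))) − g_l(f_j′(x_j(k))) ), where each weight matrix W(k) is symmetric, η > 0 is a step size, each f_i : ℝ → ℝ is differentiable, and g_n : ℝ → ℝ is odd. If the initial state satisfies Σ_{i=1}^{n} x_i(0) = b, then Σ_{i=1}^{n} x_i(k) = b for all k ≥ 0; that is, the trajectory remains in the feasible set S_b = {x ∈ ℝⁿ : 1ᵀx = b} at all times (all-time feasibility). -/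
/-- All-time feasibility of the delay-free distributed resource allocation
dynamics `x_i(k+1) = x_i(k) - η Σ_j W_{ij}(k) g_n(g_l(f_i'(x_i(k))) - g_l(f_j'(x_j(k))))`
with symmetric weight matrices `W(k)`, step size `η > 0`, differentiable local costs
`f_i`, and odd node nonlinearity `g_n`: if `Σ_i x_i(0) = b` then `Σ_i x_i(k) = b` for
all `k ≥ 0`. -/
theorem all_time_feasibility_delay_free {n : ℕ}
    (W : ℕ → Matrix (Fin n) (Fin n) ℝ)
    (hWsym : ∀ k i j, W k i j = W k j i)
    (η : ℝ) (hη : 0 < η)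
    (f : Fin n → ℝ → ℝ) (hf : ∀ i, Differentiable ℝ (f i))
    (gn gl : ℝ → ℝ) (hgn_odd : ∀ z : ℝ, gn (-z) = - gn z)
    (b : ℝ)
    (x : ℕ → Fin n → ℝ)
    (hdyn : ∀ k i, x (k + 1) i = x k i -
      η * ∑ j : Fin n, W k i j *
        gn (gl (deriv (f i) (x k i)) - gl (deriv (f j) (x k j))))
    (hx0 : ∑ i : Fin n, x 0 i = b) :
    ∀ k : ℕ, ∑ i : Fin n, x k i = b := by
  intro k
  induction k with
  | zero => exact hx0
  | succ k ih =>
    have key : ∑ i : Fin n, ∑ j : Fin n, W k i j *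
        gn (gl (deriv (f i) (x k i)) - gl (deriv (f j) (x k j))) = 0 := by
      have h : ∀ i j : Fin n, W k i j *
          gn (gl (deriv (f i) (x k i)) - gl (deriv (f j) (x k j)))
          = - (W k j i * gn (gl (deriv (f j) (x k j)) - gl (deriv (f i) (x k i)))) := by
        intro i j
        rw [hWsym k i j, ← neg_sub, hgn_odd]
        ring
      have := Finset.sum_comm (s := Finset.univ) (t := Finset.univ)
        (f := fun i j : Fin n => W k i j *
          gn (gl (deriv (f i) (x k i)) - gl (deriv (f j) (x k j))))
      have h2 : ∑ i : Fin n, ∑ j : Fin n, W k i j *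
          gn (gl (deriv (f i) (x k i)) - gl (deriv (f j) (x k j)))
          = - ∑ i : Fin n, ∑ j : Fin n, W k i j *
          gn (gl (deriv (f i) (x k i)) - gl (deriv (f j) (x k j))) := by
        conv_lhs => rw [Finset.sum_comm]
        rw [← Finset.sum_neg_distrib]
        refine Finset.sum_congr rfl fun i _ => ?_
        rw [← Finset.sum_neg_distrib]
        exact Finset.sum_congr rfl fun j _ => h j i
      linarith
    calc ∑ i : Fin n, x (k + 1) i
        = ∑ i : Fin n, (x k i - η * ∑ j : Fin n, W k i j *
            gn (gl (deriv (f i) (x k i)) - gl (deriv (f j) (x k j)))) := by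
          exact Finset.sum_congr rfl fun i _ => hdyn k i
      _ = (∑ i : Fin n, x k i) - η * ∑ i : Fin n, ∑ j : Fin n, W k i j *
            gn (gl (deriv (f i) (x k i)) - gl (deriv (f j) (x k j))) := by
          rw [Finset.sum_sub_distrib, ← Finset.mul_sum]
      _ = b := by rw [key, ih]; ring
end

section
/- Consider n agents with states evolving under the time-delayed distributed resource allocation dynamics x_i(k+1) = x_i(k) − η_τ Σ_{j=1}^{n} Σ_{r=0}^{τ̄} W_{ij} · g_n( g_l(f_i′(x_i(k−r))) − g_l(f_j′(x_j(k−r))) ) · 𝕀_{k−r,ij}(r), where W is symmetric, g_n : ℝ → ℝ is odd, each f_i is differentiable, the link delays are symmetric (τ_{ij}(k) = τ_{ji}(k) ∈ {0,1,…,τ̄} for all k), the indicator is 𝕀_{k,ij}(τ) = 1 if τ_{ij}(k) = τ and 0 otherwise, and states for nonpositive times are fixed initial history values. If Σ_{i=1}^{n} x_i(0) = b and the history is initialized so that the trajectory is well defined, then Σ_{i=1}^{n} x_i(k) = b for all k ≥ 0, i.e., the delayed dynamics is all-time feasible. -/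
/-- All-time feasibility of the time-delayed distributed resource
allocation dynamics
`x_i(k+1) = x_i(k) - η_τ Σ_j Σ_{r=0}^{τ̄} W_{ij} g_n(g_l(f_i'(x_i(k-r))) - g_l(f_j'(x_j(k-r)))) 𝕀_{k-r,ij}(r)`,
with symmetric `W`, odd `g_n`, differentiable `f_i`, symmetric bounded link delays
`τ_{ij}(k) = τ_{ji}(k) ≤ τ̄`, and states for nonpositive times given by a fixed initial
history (the trajectory `x : ℤ → ℝⁿ` is defined for all times, the dynamics holding for
`k ≥ 0`): if `Σ_i x_i(0) = b` then `Σ_i x_i(k) = b` for all `k ≥ 0`. -/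
theorem all_time_feasibility_delayed {n : ℕ}
    (W : Matrix (Fin n) (Fin n) ℝ) (hWsym : ∀ i j, W i j = W j i)
    (ητ : ℝ) (hητ : 0 < ητ)
    (f : Fin n → ℝ → ℝ) (hf : ∀ i, Differentiable ℝ (f i))
    (gn gl : ℝ → ℝ) (hgn_odd : ∀ z : ℝ, gn (-z) = - gn z)
    (τbar : ℕ)
    (τd : ℤ → Fin n → Fin n → ℕ)
    (hτsym : ∀ k i j, τd k i j = τd k j i)
    (hτbd : ∀ k i j, τd k i j ≤ τbar)
    (b : ℝ)
    (x : ℤ → Fin n → ℝ)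
    (hdyn : ∀ k : ℤ, 0 ≤ k → ∀ i, x (k + 1) i = x k i -
      ητ * ∑ j : Fin n, ∑ r ∈ Finset.range (τbar + 1),
        W i j *
          gn (gl (deriv (f i) (x (k - (r : ℤ)) i)) -
              gl (deriv (f j) (x (k - (r : ℤ)) j))) *
          (if τd (k - (r : ℤ)) i j = r then (1 : ℝ) else 0))
    (hx0 : ∑ i : Fin n, x 0 i = b) :
    ∀ k : ℤ, 0 ≤ k → ∑ i : Fin n, x k i = b := by
  have key : ∀ m : ℕ, ∑ i : Fin n, x (m : ℤ) i = b := by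
    intro m
    induction m with
    | zero => simpa using hx0
    | succ m ih =>
      have hk : (0:ℤ) ≤ (m:ℤ) := Int.ofNat_nonneg m
      have hstep := hdyn (m : ℤ) hk
      set T : Fin n → Fin n → ℝ := fun i j =>
        ∑ r ∈ Finset.range (τbar + 1),
          W i j *
            gn (gl (deriv (f i) (x ((m:ℤ) - (r : ℤ)) i)) -
                gl (deriv (f j) (x ((m:ℤ) - (r : ℤ)) j))) *
            (if τd ((m:ℤ) - (r : ℤ)) i j = r then (1 : ℝ) else 0) with hT
      have hanti : ∀ i j, T j i = - T i j := by
        intro i j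
        rw [hT, ← Finset.sum_neg_distrib]
        refine Finset.sum_congr rfl fun r _ => ?_
        rw [hWsym j i, hτsym _ j i]
        have h2 : gl (deriv (f j) (x ((m:ℤ) - (r : ℤ)) j)) -
            gl (deriv (f i) (x ((m:ℤ) - (r : ℤ)) i)) =
            -(gl (deriv (f i) (x ((m:ℤ) - (r : ℤ)) i)) -
              gl (deriv (f j) (x ((m:ℤ) - (r : ℤ)) j))) := by ring
        rw [h2, hgn_odd]
        ring
      have hS : ∑ i : Fin n, ∑ j : Fin n, T i j = 0 := by
        have h1 : ∑ i : Fin n, ∑ j : Fin n, T i j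
            = ∑ i : Fin n, ∑ j : Fin n, T j i := Finset.sum_comm
        have h2 : ∑ i : Fin n, ∑ j : Fin n, T j i
            = - ∑ i : Fin n, ∑ j : Fin n, T i j := by
          rw [← Finset.sum_neg_distrib]
          refine Finset.sum_congr rfl fun i _ => ?_
          rw [← Finset.sum_neg_distrib]
          exact Finset.sum_congr rfl fun j _ => hanti i j
        linarith [h1, h2]
      have hcast : ((m + 1 : ℕ) : ℤ) = (m : ℤ) + 1 := by push_cast; ring
      rw [hcast]
      calc ∑ i : Fin n, x ((m:ℤ) + 1) i
          = ∑ i : Fin n, (x (m:ℤ) i - ητ * ∑ j : Fin n, T i j) :=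
            Finset.sum_congr rfl fun i _ => hstep i
        _ = (∑ i : Fin n, x (m:ℤ) i) - ητ * ∑ i : Fin n, ∑ j : Fin n, T i j := by
            rw [Finset.sum_sub_distrib, ← Finset.mul_sum]
        _ = b := by rw [hS, ih]; ring
  intro k hk
  obtain ⟨m, rfl⟩ := Int.eq_ofNat_of_zero_le hk
  exact key m
end

section
/- Let W be a symmetric n×n matrix with nonnegative entries such that the undirected graph with edge set {(i,j) : W_{ij} > 0} is connected. Let g_l : ℝ → ℝ be strictly increasing, and let g_n : ℝ → ℝ be strictly sign-preserving (z·g_n(z) > 0 for z ≠ 0 and g_n(0) = 0). Let each f_i : ℝ → ℝ be differentiable. If x̂ ∈ ℝⁿ satisfies the equilibrium condition Σ_{j=1}^{n} W_{ij} · g_n( g_l(f_i′(x̂_i)) − g_l(f_j′(x̂_j)) ) = 0 for every i, then all the gradients agree: f_i′(x̂_i) = f_j′(x̂_j) for all i, j; equivalently, ∇F(x̂) ∈ span{1}. -/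
/-- Over a connected undirected network (edge `(i,j)` present whenever
`W i j > 0`, `W` symmetric nonnegative), with `g_l` strictly increasing, `g_n` strictly
sign-preserving, and `f_i` differentiable, any equilibrium point `x̂` satisfying
`Σ_j W_{ij} g_n(g_l(f_i'(x̂_i)) - g_l(f_j'(x̂_j))) = 0` for every `i` has all gradients
in agreement: `f_i'(x̂_i) = f_j'(x̂_j)` for all `i, j` (i.e. `∇F(x̂) ∈ span{1}`). -/
theorem equilibrium_gradient_consensus {n : ℕ}
    (W : Matrix (Fin n) (Fin n) ℝ)
    (hWsym : ∀ i j, W i j = W j i) (hWpos : ∀ i j, 0 ≤ W i j)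
    (hconn : ∀ i j : Fin n, Relation.ReflTransGen (fun a b => 0 < W a b) i j)
    (gl : ℝ → ℝ) (hgl : StrictMono gl)
    (gn : ℝ → ℝ) (hgn_sign : ∀ z : ℝ, z ≠ 0 → 0 < z * gn z) (hgn0 : gn 0 = 0)
    (f : Fin n → ℝ → ℝ) (hf : ∀ i, Differentiable ℝ (f i))
    (xhat : Fin n → ℝ)
    (heq : ∀ i, ∑ j : Fin n,
      W i j * gn (gl (deriv (f i) (xhat i)) - gl (deriv (f j) (xhat j))) = 0) :
    ∀ i j, deriv (f i) (xhat i) = deriv (f j) (xhat j) := by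
  intro i j
  set φ : Fin n → ℝ := fun k => gl (deriv (f k) (xhat k)) with hφ
  -- gn is nonnegative on nonnegative inputs
  have hgn_nonneg : ∀ z : ℝ, 0 ≤ z → 0 ≤ gn z := by
    intro z hz
    rcases eq_or_lt_of_le hz with h | h
    · simp [← h, hgn0]
    · have := hgn_sign z (ne_of_gt h)
      nlinarith
  -- neighbor of a maximizer has the same φ value
  have hnb : ∀ b : Fin n, (∀ k, φ k ≤ φ b) → ∀ c, 0 < W b c → φ c = φ b := by
    intro b hmax c hWbc
    have hterm : ∀ k ∈ Finset.univ, 0 ≤ W b k * gn (φ b - φ k) := by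
      intro k _
      exact mul_nonneg (hWpos b k) (hgn_nonneg _ (by linarith [hmax k]))
    have hsum : ∑ k : Fin n, W b k * gn (φ b - φ k) = 0 := heq b
    have hzero := (Finset.sum_eq_zero_iff_of_nonneg hterm).mp hsum c (Finset.mem_univ c)
    have hgnz : gn (φ b - φ c) = 0 := by
      rcases mul_eq_zero.mp hzero with h | h
      · exact absurd h (ne_of_gt hWbc)
      · exact h
    by_contra hne
    have hd : φ b - φ c ≠ 0 := fun h => hne (by linarith [sub_eq_zero.mp h])
    have := hgn_sign _ hd
    rw [hgnz] at this
    simp at this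
  -- take a maximizer i0
  have hne : (Finset.univ : Finset (Fin n)).Nonempty := ⟨i, Finset.mem_univ i⟩
  obtain ⟨i0, _, hmax⟩ := Finset.exists_max_image Finset.univ φ hne
  have hmax' : ∀ k, φ k ≤ φ i0 := fun k => hmax k (Finset.mem_univ k)
  -- everything reachable from i0 has the max value
  have hall : ∀ k, φ k = φ i0 := by
    intro k
    have hpath := hconn i0 k
    induction hpath with
    | refl => rfl
    | tail _ hbc ih =>
      rw [← ih]
      exact hnb _ (fun m => ih ▸ hmax' m) _ hbc
  have : φ i = φ j := by rw [hall i, hall j]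
  exact hgl.injective this
end
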